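/- (Campanato-type iteration, Step 3 of the proof of Theorem 1.1.) Let n ≥ 1, β ∈ (0,1), r ∈ (0,1), C₀ > 0, and let u : B₁ → ℝ. Suppose there are affine functions l_k(x) = a_k + ⟨b_k, x⟩ (a_k ∈ ℝ, b_k ∈ ℝⁿ, k ∈ ℕ) such that for every k ≥ 1: sup_{x ∈ B_{r^k}} |u(x) − l_k(x)| ≤ r^{k(1+β)} and |b_{k+1} − b_k| ≤ C₀·r^{kβ}. Then the sequence (b_k) converges to some b ∈ ℝⁿ, u is differentiable at 0 with derivative b, and there exists a constant C depending only on C₀, r and β such that |u(x) − u(0) − ⟨b, x⟩| ≤ C·|x|^{1+β} for all x ∈ B_r. -/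

import Mathlib

/-! The slopes `b_k` form a geometrically Cauchy sequence, so `b_k → b` with
`‖b_k - b‖ ≲ r^{kβ}`. For `‖x‖ < r^k`, comparing `u` with `l_k` at `x` and at `0` gives
`|u x - u 0 - ⟪b, x⟫| ≤ 2 r^{k(1+β)} + ‖b_k - b‖ ‖x‖ ≲ r^{k(1+β)}`, and choosing `k` with
`r^{k+1} ≤ ‖x‖ < r^k` turns this into `≲ ‖x‖^{1+β}`. Since `1 + β > 1`, this bound also
makes `b` the gradient of `u` at `0`. -/

open Metric Set Filter
open scoped Matrix RealInnerProductSpace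

noncomputable section

abbrev En (n : ℕ) : Type := EuclideanSpace ℝ (Fin n)

/-- Uniform (λ,Λ)-ellipticity: `λ·tr N ≤ F M − F (M+N) ≤ Λ·tr N` for all symmetric `M`
and positive semidefinite `N`. -/
def UniformlyElliptic {n : ℕ} (lam Lam : ℝ) (F : Matrix (Fin n) (Fin n) ℝ → ℝ) : Prop :=
  ∀ M N : Matrix (Fin n) (Fin n) ℝ, M.IsHermitian → N.PosSemidef →
    lam * N.trace ≤ F M - F (M + N) ∧ F M - F (M + N) ≤ Lam * N.trace

/-- The Hessian matrix of `φ` at `x`. -/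
def hessMatrix {n : ℕ} (φ : En n → ℝ) (x : En n) : Matrix (Fin n) (Fin n) ℝ :=
  fun i j => iteratedFDeriv ℝ 2 φ x ![EuclideanSpace.single i 1, EuclideanSpace.single j 1]

/-- `u` is a viscosity solution of `Φ(x,|ξ+Du|)F(D²u) = f(x)` in `B₁`. -/
def IsViscositySol {n : ℕ} (Φ : En n → ℝ → ℝ) (F : Matrix (Fin n) (Fin n) ℝ → ℝ)
    (f : En n → ℝ) (ξ : En n) (u : En n → ℝ) : Prop :=
  ∀ φ : En n → ℝ, ContDiffOn ℝ 2 φ (ball (0 : En n) 1) →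
    ∀ x₀ ∈ ball (0 : En n) 1, gradient φ x₀ ≠ 0 →
      (IsLocalMinOn (fun x => u x - φ x) (ball (0 : En n) 1) x₀ →
        f x₀ ≤ Φ x₀ ‖ξ + gradient φ x₀‖ * F (hessMatrix φ x₀)) ∧
      (IsLocalMaxOn (fun x => u x - φ x) (ball (0 : En n) 1) x₀ →
        Φ x₀ ‖ξ + gradient φ x₀‖ * F (hessMatrix φ x₀) ≤ f x₀)

/-- Condition (A2) on the structure function `Φ`. -/
structure CondA2 {n : ℕ} (Φ : En n → ℝ → ℝ) (iΦ sΦ L ν₀ ν₁ : ℝ) : Prop where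
  cont : ContinuousOn (fun p : En n × ℝ => Φ p.1 p.2) (ball (0 : En n) 1 ×ˢ Ici (0:ℝ))
  nonneg : ∀ x ∈ ball (0 : En n) 1, ∀ t : ℝ, 0 ≤ t → 0 ≤ Φ x t
  i_le_s : iΦ ≤ sΦ
  neg_one_lt_i : (-1 : ℝ) < iΦ
  one_le_L : 1 ≤ L
  nu0_pos : 0 < ν₀
  nu0_le_nu1 : ν₀ ≤ ν₁
  almost_mono : ∀ x ∈ ball (0 : En n) 1, ∀ s t : ℝ, 0 < s → s ≤ t →
    Φ x s / s ^ iΦ ≤ L * (Φ x t / t ^ iΦ)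
  almost_anti : ∀ x ∈ ball (0 : En n) 1, ∀ s t : ℝ, 0 < s → s ≤ t →
    Φ x t / t ^ sΦ ≤ L * (Φ x s / s ^ sΦ)
  phi_one : ∀ x ∈ ball (0 : En n) 1, ν₀ ≤ Φ x 1 ∧ Φ x 1 ≤ ν₁

/-- Viscosity solution of the homogeneous equation `F(D²h) = 0` in `B₁`. -/
def IsViscositySolHomog {n : ℕ} (F : Matrix (Fin n) (Fin n) ℝ → ℝ) (h : En n → ℝ) : Prop :=
  ∀ φ : En n → ℝ, ContDiffOn ℝ 2 φ (ball (0 : En n) 1) →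
    ∀ x₀ ∈ ball (0 : En n) 1,
      (IsLocalMinOn (fun x => h x - φ x) (ball (0 : En n) 1) x₀ → 0 ≤ F (hessMatrix φ x₀)) ∧
      (IsLocalMaxOn (fun x => h x - φ x) (ball (0 : En n) 1) x₀ → F (hessMatrix φ x₀) ≤ 0)

/-- `alphaBar` is a Krylov–Safonov exponent for `F`, with constant `cKS`. -/
def KrylovSafonovExp {n : ℕ} (F : Matrix (Fin n) (Fin n) ℝ → ℝ) (alphaBar cKS : ℝ) : Prop :=
  0 < cKS ∧
  ∀ h : En n → ℝ, ContinuousOn h (ball (0 : En n) 1) → IsViscositySolHomog F h →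
    ∀ Ch : ℝ, (∀ x ∈ ball (0 : En n) 1, |h x| ≤ Ch) →
      (∀ x ∈ ball (0 : En n) (1/2), DifferentiableAt ℝ h x) ∧
      (∀ x ∈ ball (0 : En n) (1/2), |h x| + ‖gradient h x‖ ≤ cKS * Ch) ∧
      (∀ x ∈ ball (0 : En n) (1/2), ∀ y ∈ ball (0 : En n) (1/2),
        ‖gradient h x - gradient h y‖ ≤ cKS * Ch * ‖x - y‖ ^ alphaBar)

open Topology Asymptotics

lemma exists_pow_succ_le_and_lt_pow {r t : ℝ} (ht0 : 0 < t) (ht1 : t < 1) (hr : r < 1) :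
    ∃ k : ℕ, r ^ (k + 1) ≤ t ∧ t < r ^ k := by
  classical
  have hex : ∃ m : ℕ, r ^ m ≤ t := (exists_pow_lt_of_lt_one ht0 hr).imp fun _ => le_of_lt
  have hm : Nat.find hex ≠ 0 := by
    intro h
    have := Nat.find_spec hex
    rw [h, pow_zero] at this
    linarith
  obtain ⟨k, hk⟩ := Nat.exists_eq_succ_of_ne_zero hm
  refine ⟨k, ?_, not_le.1 (Nat.find_min hex (by omega))⟩
  rw [← Nat.succ_eq_add_one, ← hk]
  exact Nat.find_spec hex

lemma abs_le_div_mul_norm_rpow_of_forall_ball_pow {E : Type*} [NormedAddCommGroup E]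
    {f : E → ℝ} {r M γ : ℝ} (hr0 : 0 < r) (hr1 : r < 1) (hγ : 0 < γ) (hM : 0 ≤ M)
    (hf0 : f 0 = 0) (h : ∀ k : ℕ, 1 ≤ k → ∀ x ∈ ball (0 : E) (r ^ k), |f x| ≤ M * (r ^ k) ^ γ) :
    ∀ x ∈ ball (0 : E) r, |f x| ≤ M / r ^ γ * ‖x‖ ^ γ := by
  intro x hx
  rw [mem_ball_zero_iff] at hx
  rcases eq_or_ne x 0 with rfl | hx0
  · simp [hf0, Real.zero_rpow hγ.ne']
  obtain ⟨k, hk_le, hk_lt⟩ :=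
    exists_pow_succ_le_and_lt_pow (norm_pos_iff.2 hx0) (hx.trans hr1) hr1
  have hk : 1 ≤ k := by
    by_contra! hk0
    rw [Nat.lt_one_iff.1 hk0, zero_add, pow_one] at hk_le
    linarith
  have hrk : r ^ k ≤ ‖x‖ / r := by
    rw [le_div_iff₀ hr0, ← pow_succ]
    exact hk_le
  calc |f x| ≤ M * (r ^ k) ^ γ := h k hk x (mem_ball_zero_iff.2 hk_lt)
    _ ≤ M * (‖x‖ / r) ^ γ := by gcongr
    _ = M / r ^ γ * ‖x‖ ^ γ := by rw [Real.div_rpow (norm_nonneg x) hr0.le]; ring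

lemma exists_tendsto_of_dist_le_geometric_of_one_le {X : Type*} [PseudoMetricSpace X]
    [CompleteSpace X] {f : ℕ → X} {C q : ℝ} (hq : q < 1)
    (hf : ∀ k : ℕ, 1 ≤ k → dist (f k) (f (k + 1)) ≤ C * q ^ k) :
    ∃ L, Tendsto f atTop (𝓝 L) ∧ ∀ k : ℕ, 1 ≤ k → dist (f k) L ≤ C * q ^ k / (1 - q) := by
  have hg : ∀ k : ℕ, dist (f (k + 1)) (f (k + 1 + 1)) ≤ C * q * q ^ k := fun k => by
    rw [mul_assoc, ← pow_succ']
    exact hf (k + 1) (by omega)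
  obtain ⟨L, hL⟩ := cauchySeq_tendsto_of_complete (cauchySeq_of_le_geometric q (C * q) hq hg)
  refine ⟨L, (tendsto_add_atTop_iff_nat 1).1 hL, fun k hk => ?_⟩
  obtain ⟨m, rfl⟩ := Nat.exists_eq_add_of_le' hk
  calc dist (f (m + 1)) L ≤ C * q * q ^ m / (1 - q) :=
        dist_le_of_le_geometric_of_tendsto q (C * q) hq hg hL m
    _ = C * q ^ (m + 1) / (1 - q) := by ring

lemma abs_sub_sub_inner_le_of_affine_approx {E : Type*} [NormedAddCommGroup E]
    [InnerProductSpace ℝ E] {u : E → ℝ} {a ε : ℝ} {b c x : E}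
    (hx : |u x - (a + ⟪b, x⟫)| ≤ ε) (h0 : |u 0 - a| ≤ ε) :
    |u x - u 0 - ⟪c, x⟫| ≤ 2 * ε + ‖b - c‖ * ‖x‖ := by
  have hsplit : u x - u 0 - ⟪c, x⟫ = (u x - (a + ⟪b, x⟫)) - (u 0 - a) + ⟪b - c, x⟫ := by
    rw [inner_sub_left]; ring
  have h₁ := abs_add_le ((u x - (a + ⟪b, x⟫)) - (u 0 - a)) ⟪b - c, x⟫
  have h₂ := abs_sub (u x - (a + ⟪b, x⟫)) (u 0 - a)
  have h₃ := abs_real_inner_le_norm (b - c) x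
  rw [hsplit]
  linarith

lemma abs_sub_sub_inner_le_of_forall_ball {E : Type*} [NormedAddCommGroup E]
    [InnerProductSpace ℝ E] {u : E → ℝ} {a ρ β D : ℝ} {b c : E} (hρ : 0 < ρ)
    (hu : ∀ y ∈ ball (0 : E) ρ, |u y - (a + ⟪b, y⟫)| ≤ ρ ^ (1 + β))
    (hbc : ‖b - c‖ ≤ D * ρ ^ β) :
    ∀ x ∈ ball (0 : E) ρ, |u x - u 0 - ⟪c, x⟫| ≤ (2 + D) * ρ ^ (1 + β) := by
  intro x hx
  calc |u x - u 0 - ⟪c, x⟫| ≤ 2 * ρ ^ (1 + β) + ‖b - c‖ * ‖x‖ :=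
        abs_sub_sub_inner_le_of_affine_approx (hu x hx) (by simpa using hu 0 (mem_ball_self hρ))
    _ ≤ 2 * ρ ^ (1 + β) + D * ρ ^ β * ρ := by
        gcongr
        exacts [(norm_nonneg _).trans hbc, (mem_ball_zero_iff.1 hx).le]
    _ = (2 + D) * ρ ^ (1 + β) := by rw [Real.rpow_add hρ, Real.rpow_one]; ring

lemma isLittleO_norm_rpow_id {E : Type*} [SeminormedAddCommGroup E] {p : ℝ} (hp : 1 < p) :
    (fun x : E => ‖x‖ ^ p) =o[𝓝 0] fun x => x := by
  have hp' : 0 < p - 1 := sub_pos.2 hp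
  have h0 : Tendsto (fun x : E => ‖x‖ ^ (p - 1)) (𝓝 0) (𝓝 0) := by
    simpa [Real.zero_rpow hp'.ne'] using
      (continuous_norm.tendsto (0 : E)).rpow_const (Or.inr hp'.le)
  refine isLittleO_norm_right.1 ?_
  refine (((isLittleO_one_iff ℝ).2 h0).mul_isBigO (isBigO_refl (fun x : E => ‖x‖) _)).congr
    (fun x => ?_) (fun x => one_mul _)
  rw [← Real.rpow_add_one' (norm_nonneg x) (by linarith), sub_add_cancel]

lemma hasGradientAt_of_abs_sub_sub_inner_le {F : Type*} [NormedAddCommGroup F]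
    [InnerProductSpace ℝ F] [CompleteSpace F] {f : F → ℝ} {g x₀ : F} {C p : ℝ} (hp : 1 < p)
    (h : ∀ᶠ x in 𝓝 x₀, |f x - f x₀ - ⟪g, x - x₀⟫| ≤ C * ‖x - x₀‖ ^ p) :
    HasGradientAt f g x₀ := by
  rw [hasGradientAt_iff_isLittleO]
  have hO : (fun x => f x - f x₀ - ⟪g, x - x₀⟫) =O[𝓝 x₀] fun x => ‖x - x₀‖ ^ p :=
    IsBigO.of_bound C <| h.mono fun x hx => by
      rwa [Real.norm_eq_abs, Real.norm_eq_abs, abs_of_nonneg (Real.rpow_nonneg (norm_nonneg _) p)]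
  exact hO.trans_isLittleO <|
    (isLittleO_norm_rpow_id hp).comp_tendsto (tendsto_sub_nhds_zero_iff.2 tendsto_id)

theorem campanato_iteration_general {n : ℕ} (β r C₀ : ℝ)
    (hβ : β ∈ Ioo (0:ℝ) 1) (hr : r ∈ Ioo (0:ℝ) 1) (hC₀ : 0 < C₀) :
    ∃ C : ℝ, 0 < C ∧
      ∀ (u : En n → ℝ) (a : ℕ → ℝ) (b : ℕ → En n),
        (∀ k : ℕ, 1 ≤ k → ∀ x ∈ ball (0 : En n) (r ^ k),
          |u x - (a k + ⟪b k, x⟫)| ≤ r ^ ((k : ℝ) * (1 + β))) →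
        (∀ k : ℕ, 1 ≤ k → ‖b (k + 1) - b k‖ ≤ C₀ * r ^ ((k : ℝ) * β)) →
        ∃ blim : En n,
          Tendsto b atTop (nhds blim) ∧
          HasGradientAt u blim 0 ∧
          (∀ x ∈ ball (0 : En n) r, |u x - u 0 - ⟪blim, x⟫| ≤ C * ‖x‖ ^ (1 + β)) := by
  obtain ⟨hr0, hr1⟩ := hr
  have hβ' : 1 < 1 + β := lt_add_of_pos_right 1 hβ.1
  have hq1 : r ^ β < 1 := Real.rpow_lt_one hr0.le hr1 hβ.1
  set D := C₀ / (1 - r ^ β) with hD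
  have hD0 : 0 ≤ D := div_nonneg hC₀.le (sub_nonneg.2 hq1.le)
  refine ⟨(2 + D) / r ^ (1 + β), by positivity, fun u a b hu hb => ?_⟩
  have hgeom : ∀ k : ℕ, 1 ≤ k → dist (b k) (b (k + 1)) ≤ C₀ * (r ^ β) ^ k := fun k hk => by
    rw [dist_comm, dist_eq_norm, ← Real.rpow_mul_natCast hr0.le, mul_comm β]
    exact hb k hk
  obtain ⟨blim, hlim, hdist⟩ := exists_tendsto_of_dist_le_geometric_of_one_le hq1 hgeom
  have hbk : ∀ k : ℕ, 1 ≤ k → ‖b k - blim‖ ≤ D * (r ^ k) ^ β := fun k hk => by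
    rw [← dist_eq_norm, ← Real.rpow_pow_comm hr0.le, hD, div_mul_eq_mul_div]
    exact hdist k hk
  have hscale : ∀ k : ℕ, 1 ≤ k → ∀ x ∈ ball (0 : En n) (r ^ k),
      |u x - u 0 - ⟪blim, x⟫| ≤ (2 + D) * (r ^ k) ^ (1 + β) := fun k hk =>
    abs_sub_sub_inner_le_of_forall_ball (pow_pos hr0 k)
      (fun y hy => Real.rpow_natCast_mul hr0.le k _ ▸ hu k hk y hy) (hbk k hk)
  have hholder := abs_le_div_mul_norm_rpow_of_forall_ball_pow
    (f := fun x => u x - u 0 - ⟪blim, x⟫) hr0 hr1 (by linarith) (by positivity) (by simp) hscale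
  refine ⟨blim, hlim, ?_, hholder⟩
  refine hasGradientAt_of_abs_sub_sub_inner_le (C := (2 + D) / r ^ (1 + β)) hβ' ?_
  filter_upwards [ball_mem_nhds (0 : En n) hr0] with x hx
  simpa using hholder x hx

/-- Campanato-type iteration (Step 3 of the proof of Theorem 1.1): if `u` is approximated at
every scale `r^k` by affine functions `l_k(x) = a_k + ⟨b_k, x⟩` with errors `r^{k(1+β)}` and
`|b_{k+1} − b_k| ≤ C₀ r^{kβ}`, then the slopes converge to some `b`, `u` is differentiable at `0`
with gradient `b`, and `|u(x) − u(0) − ⟨b,x⟩| ≤ C|x|^{1+β}` on `B_r`. -/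
theorem campanato_iteration {n : ℕ} (hn : 1 ≤ n) (β r C₀ : ℝ)
    (hβ : β ∈ Ioo (0:ℝ) 1) (hr : r ∈ Ioo (0:ℝ) 1) (hC₀ : 0 < C₀) :
    ∃ C : ℝ, 0 < C ∧
      ∀ (u : En n → ℝ) (a : ℕ → ℝ) (b : ℕ → En n),
        (∀ k : ℕ, 1 ≤ k → ∀ x ∈ ball (0 : En n) (r ^ k),
          |u x - (a k + ⟪b k, x⟫)| ≤ r ^ ((k : ℝ) * (1 + β))) →
        (∀ k : ℕ, 1 ≤ k → ‖b (k + 1) - b k‖ ≤ C₀ * r ^ ((k : ℝ) * β)) →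
        ∃ blim : En n,
          Tendsto b atTop (nhds blim) ∧
          HasGradientAt u blim 0 ∧
          (∀ x ∈ ball (0 : En n) r, |u x - u 0 - ⟪blim, x⟫| ≤ C * ‖x‖ ^ (1 + β)) :=
  campanato_iteration_general β r C₀ hβ hr hC₀
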